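/- Combining the converse steps: if K = Φ(X^n), L = Ψ(Y^n, Z^n), Pr[K≠L] ≤ ε, |K| ≤ e^{cn}, the channel from T^n to Z^n is memoryless with per-letter mutual information at most C, and Y^n — (X^n,K) — T^n — Z^n forms a Markov chain, then I(K;X^n) - I(K;Y^n) = H(K) - I(K;Y^n) = H(K|Y^n) ≤ n·C + 1 + ε·c·n. -/

import Mathlib

set_option synthInstance.maxSize 512
set_option maxHeartbeats 1000000

open Real Finset

namespace CRG

variable {Ω : Type*} [Fintype Ω]

/-- Probability that the random variable `X` takes the value `x`, under the pmf `p` on `Ω`. -/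
noncomputable def pr {α : Type*} [DecidableEq α] (p : Ω → ℝ) (X : Ω → α) (x : α) : ℝ :=
  ∑ ω, if X ω = x then p ω else 0

/-- Shannon entropy (in nats) of the random variable `X` under the pmf `p`. -/
noncomputable def ent {α : Type*} [Fintype α] [DecidableEq α] (p : Ω → ℝ) (X : Ω → α) : ℝ :=
  ∑ x, Real.negMulLog (pr p X x)

/-- Conditional entropy `H(X|Y)`. -/
noncomputable def condEnt {α β : Type*} [Fintype α] [DecidableEq α] [Fintype β] [DecidableEq β]
    (p : Ω → ℝ) (X : Ω → α) (Y : Ω → β) : ℝ :=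
  ent p (fun ω => (X ω, Y ω)) - ent p Y

/-- Mutual information `I(X;Y)`. -/
noncomputable def mi {α β : Type*} [Fintype α] [DecidableEq α] [Fintype β] [DecidableEq β]
    (p : Ω → ℝ) (X : Ω → α) (Y : Ω → β) : ℝ :=
  ent p X + ent p Y - ent p (fun ω => (X ω, Y ω))

/-- Conditional mutual information `I(X;Y|Z)`. -/
noncomputable def cmi {α β γ : Type*} [Fintype α] [DecidableEq α] [Fintype β] [DecidableEq β]
    [Fintype γ] [DecidableEq γ] (p : Ω → ℝ) (X : Ω → α) (Y : Ω → β) (Z : Ω → γ) : ℝ :=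
  condEnt p X Z + condEnt p Y Z - condEnt p (fun ω => (X ω, Y ω)) Z

/-- `A` and `C` are conditionally independent given `B` (equivalently, the Markov chain
`A — B — C` holds). -/
def CondIndep {α β γ : Type*} [DecidableEq α] [DecidableEq β] [DecidableEq γ]
    (p : Ω → ℝ) (A : Ω → α) (B : Ω → β) (C : Ω → γ) : Prop :=
  ∀ a b c, pr p (fun ω => (A ω, B ω, C ω)) (a, b, c) * pr p B b =
    pr p (fun ω => (A ω, B ω)) (a, b) * pr p (fun ω => (B ω, C ω)) (b, c)

end CRG

open CRG

/-!
Fano's inequality bounds `H(K | Yⁿ, Zⁿ)` by `log 2 + Pr[K ≠ L] log |κ|`, because `K` is recovered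
from `Yⁿ, Zⁿ` and the error pattern. Conditioning on `Zⁿ` as well costs at most `I(K, Yⁿ; Zⁿ)`,
which the Markov chain `(Xⁿ, K, Yⁿ) — Tⁿ — Zⁿ` bounds by `I(Tⁿ; Zⁿ)`; revealing `Zⁿ` one
coordinate at a time, memorylessness splits this into `∑ I(Tᵢ; Zᵢ) ≤ n C`.

All the entropy inequalities come from Gibbs' inequality against the law `P(a,b) P(b,c) / P(b)`,
which gives submodularity, with equality under conditional independence.
-/

namespace CRG

variable {Ω α β γ : Type*} [Fintype Ω] {p : Ω → ℝ}

section Distribution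

variable [DecidableEq α] [DecidableEq β]

lemma pr_nonneg (hp : ∀ ω, 0 ≤ p ω) (X : Ω → α) (x : α) : 0 ≤ pr p X x :=
  Finset.sum_nonneg fun ω _ => by split <;> simp [hp ω]

lemma sum_pr [Fintype α] (X : Ω → α) : ∑ x, pr p X x = ∑ ω, p ω := by
  unfold pr
  rw [Finset.sum_comm]
  simp

lemma pr_comp [Fintype α] (f : α → β) (X : Ω → α) (y : β) :
    pr p (fun ω => f (X ω)) y = ∑ x with f x = y, pr p X x := by
  unfold pr
  rw [Finset.sum_comm]
  refine Finset.sum_congr rfl fun ω _ => ?_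
  rw [Finset.sum_filter, Finset.sum_eq_single (X ω)] <;> aesop

lemma pr_le_pr_comp (hp : ∀ ω, 0 ≤ p ω) (f : α → β) (X : Ω → α) (x : α) :
    pr p X x ≤ pr p (fun ω => f (X ω)) (f x) :=
  Finset.sum_le_sum fun ω _ => by
    by_cases h : X ω = x
    · simp [h]
    · simp only [h, if_false]
      split <;> simp [hp ω]

lemma pr_pos_of_comp (hp : ∀ ω, 0 ≤ p ω) (f : α → β) (X : Ω → α) {x : α}
    (h : 0 < pr p X x) : 0 < pr p (fun ω => f (X ω)) (f x) :=
  h.trans_le (pr_le_pr_comp hp f X x)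

lemma pr_comp_of_injective {f : α → β} (hf : f.Injective) (X : Ω → α) (x : α) :
    pr p (fun ω => f (X ω)) (f x) = pr p X x := by
  simp only [pr, hf.eq_iff]

lemma sum_pr_pair_left [Fintype α] (A : Ω → α) (B : Ω → β) (b : β) :
    ∑ a, pr p (fun ω => (A ω, B ω)) (a, b) = pr p B b := by
  unfold pr
  rw [Finset.sum_comm]
  refine Finset.sum_congr rfl fun ω _ => ?_
  by_cases h : B ω = b <;> simp [h, Prod.ext_iff]

end Distribution

section Entropy

variable [Fintype α] [DecidableEq α] [Fintype β] [DecidableEq β]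

lemma ent_eq_neg_sum (X : Ω → α) : ent p X = -∑ x, pr p X x * log (pr p X x) := by
  simp [ent, negMulLog, Finset.sum_neg_distrib]

lemma ent_comp_eq_neg_sum (f : α → β) (X : Ω → α) :
    ent p (fun ω => f (X ω)) = -∑ x, pr p X x * log (pr p (fun ω => f (X ω)) (f x)) := by
  rw [ent_eq_neg_sum, ← Finset.sum_fiberwise Finset.univ f]
  congr 1
  refine Finset.sum_congr rfl fun y _ => ?_
  have hfiber : ∀ x ∈ univ.filter (f · = y), pr p X x * log (pr p (fun ω => f (X ω)) (f x))
      = pr p X x * log (pr p (fun ω => f (X ω)) y) := fun x hx => by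
    rw [(Finset.mem_filter.1 hx).2]
  rw [Finset.sum_congr rfl hfiber, ← Finset.sum_mul, ← pr_comp]

lemma ent_comp_le (hp : ∀ ω, 0 ≤ p ω) (f : α → β) (X : Ω → α) :
    ent p (fun ω => f (X ω)) ≤ ent p X := by
  rw [ent_comp_eq_neg_sum, ent_eq_neg_sum, neg_le_neg_iff]
  refine Finset.sum_le_sum fun x _ => ?_
  rcases (pr_nonneg hp X x).eq_or_lt with h | h
  · simp [← h]
  · exact mul_le_mul_of_nonneg_left (log_le_log h (pr_le_pr_comp hp f X x)) h.le

lemma ent_comp_of_injective {f : α → β} (hf : f.Injective) (X : Ω → α) :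
    ent p (fun ω => f (X ω)) = ent p X := by
  rw [ent_comp_eq_neg_sum, ent_eq_neg_sum]
  simp only [pr_comp_of_injective hf]

lemma ent_eq_of_comp_of_comp (hp : ∀ ω, 0 ≤ p ω) {X : Ω → α} {Y : Ω → β} (f : α → β)
    (g : β → α) (hf : ∀ ω, Y ω = f (X ω)) (hg : ∀ ω, X ω = g (Y ω)) : ent p X = ent p Y := by
  have hY : Y = fun ω => f (X ω) := funext hf
  have hX : X = fun ω => g (Y ω) := funext hg
  refine le_antisymm ?_ ?_
  · conv_lhs => rw [hX]
    exact ent_comp_le hp g Y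
  · conv_lhs => rw [hY]
    exact ent_comp_le hp f X

lemma ent_const (hp1 : ∑ ω, p ω = 1) (a : α) : ent p (fun _ => a) = 0 := by
  refine Finset.sum_eq_zero fun x _ => ?_
  by_cases h : a = x <;> simp [pr, h, hp1]

lemma ent_le_neg_sum_mul_log (hp : ∀ ω, 0 ≤ p ω) (hp1 : ∑ ω, p ω = 1) (X : Ω → α)
    (q : α → ℝ) (hq0 : ∀ x, 0 ≤ q x) (hq : ∀ x, 0 < pr p X x → 0 < q x) (hq1 : ∑ x, q x ≤ 1) :
    ent p X ≤ -∑ x, pr p X x * log (q x) := by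
  have hpt : ∀ x, negMulLog (pr p X x) ≤ -(pr p X x * log (q x)) + (q x - pr p X x) := by
    intro x
    rcases (pr_nonneg hp X x).eq_or_lt with h | h
    · simp [← h, hq0 x]
    · have hqx := hq x h
      have key := mul_le_mul_of_nonneg_left (log_le_sub_one_of_pos (div_pos hqx h)) h.le
      rw [log_div hqx.ne' h.ne', mul_sub, mul_sub, mul_one, mul_div_cancel₀ _ h.ne'] at key
      rw [negMulLog]
      linarith
  calc ent p X ≤ ∑ x, (-(pr p X x * log (q x)) + (q x - pr p X x)) :=
        Finset.sum_le_sum fun x _ => hpt x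
    _ = -∑ x, pr p X x * log (q x) + (∑ x, q x - 1) := by
        rw [Finset.sum_add_distrib, Finset.sum_sub_distrib, Finset.sum_neg_distrib, sum_pr, hp1]
    _ ≤ _ := by linarith

end Entropy

section Markov

variable [DecidableEq α] [DecidableEq β] [DecidableEq γ]

/-- The law `(a, b, c) ↦ P(a,b) P(b,c) / P(b)` that `(A, B, C)` has exactly when `A — B — C` is a
Markov chain. -/
noncomputable def markovApprox (p : Ω → ℝ) (A : Ω → α) (B : Ω → β) (C : Ω → γ)
    (w : α × β × γ) : ℝ :=
  pr p (fun ω => (A ω, B ω)) (w.1, w.2.1) * pr p (fun ω => (B ω, C ω)) w.2 / pr p B w.2.1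

lemma markovApprox_factors_pos (hp : ∀ ω, 0 ≤ p ω) (A : Ω → α) (B : Ω → β) (C : Ω → γ)
    {w : α × β × γ} (h : 0 < pr p (fun ω => (A ω, B ω, C ω)) w) :
    0 < pr p (fun ω => (A ω, B ω)) (w.1, w.2.1) ∧ 0 < pr p (fun ω => (B ω, C ω)) w.2 ∧
      0 < pr p B w.2.1 :=
  ⟨pr_pos_of_comp hp (fun w : α × β × γ => (w.1, w.2.1)) _ h,
    pr_pos_of_comp hp (fun w : α × β × γ => w.2) _ h,
    pr_pos_of_comp hp (fun w : α × β × γ => w.2.1) _ h⟩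

variable [Fintype α] [Fintype β] [Fintype γ]

lemma neg_sum_mul_log_markovApprox (hp : ∀ ω, 0 ≤ p ω) (A : Ω → α) (B : Ω → β) (C : Ω → γ) :
    -∑ w, pr p (fun ω => (A ω, B ω, C ω)) w * log (markovApprox p A B C w)
      = ent p (fun ω => (A ω, B ω)) + ent p (fun ω => (B ω, C ω)) - ent p B := by
  set W := fun ω => (A ω, B ω, C ω)
  have hAB : ent p (fun ω => (A ω, B ω))
      = -∑ w, pr p W w * log (pr p (fun ω => (A ω, B ω)) (w.1, w.2.1)) :=
    ent_comp_eq_neg_sum (fun w : α × β × γ => (w.1, w.2.1)) W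
  have hBC : ent p (fun ω => (B ω, C ω)) = -∑ w, pr p W w * log (pr p (fun ω => (B ω, C ω)) w.2) :=
    ent_comp_eq_neg_sum (fun w : α × β × γ => w.2) W
  have hB : ent p B = -∑ w, pr p W w * log (pr p B w.2.1) :=
    ent_comp_eq_neg_sum (fun w : α × β × γ => w.2.1) W
  have hpt : ∀ w, pr p W w * log (markovApprox p A B C w)
      = pr p W w * log (pr p (fun ω => (A ω, B ω)) (w.1, w.2.1))
        + pr p W w * log (pr p (fun ω => (B ω, C ω)) w.2) - pr p W w * log (pr p B w.2.1) := by
    intro w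
    rcases (pr_nonneg hp W w).eq_or_lt with h | h
    · simp [← h]
    · obtain ⟨hab, hbc, hb⟩ := markovApprox_factors_pos hp A B C h
      rw [markovApprox, log_div (mul_pos hab hbc).ne' hb.ne', log_mul hab.ne' hbc.ne']
      ring
  rw [hAB, hBC, hB, Finset.sum_congr rfl fun w _ => hpt w, Finset.sum_sub_distrib,
    Finset.sum_add_distrib]
  ring

lemma sum_markovApprox_le_one (hp : ∀ ω, 0 ≤ p ω) (hp1 : ∑ ω, p ω = 1)
    (A : Ω → α) (B : Ω → β) (C : Ω → γ) : ∑ w, markovApprox p A B C w ≤ 1 := by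
  calc ∑ w, markovApprox p A B C w
      = ∑ v : β × γ, pr p B v.1 * pr p (fun ω => (B ω, C ω)) v / pr p B v.1 := by
        rw [Fintype.sum_prod_type, Finset.sum_comm]
        refine Finset.sum_congr rfl fun v _ => ?_
        simp only [markovApprox, ← Finset.sum_div, ← Finset.sum_mul, sum_pr_pair_left]
    _ ≤ ∑ v : β × γ, pr p (fun ω => (B ω, C ω)) v := Finset.sum_le_sum fun v _ => by
        rcases (pr_nonneg hp B v.1).eq_or_lt with h | h
        · simp [← h, pr_nonneg hp]
        · rw [mul_div_cancel_left₀ _ h.ne']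
    _ = 1 := (sum_pr _).trans hp1

lemma ent_submodular (hp : ∀ ω, 0 ≤ p ω) (hp1 : ∑ ω, p ω = 1)
    (A : Ω → α) (B : Ω → β) (C : Ω → γ) :
    ent p (fun ω => (A ω, B ω, C ω)) + ent p B
      ≤ ent p (fun ω => (A ω, B ω)) + ent p (fun ω => (B ω, C ω)) := by
  have hgibbs := ent_le_neg_sum_mul_log hp hp1 _ (markovApprox p A B C)
    (fun w => div_nonneg (mul_nonneg (pr_nonneg hp _ _) (pr_nonneg hp _ _)) (pr_nonneg hp _ _))
    (fun w h => by
      obtain ⟨hab, hbc, hb⟩ := markovApprox_factors_pos hp A B C h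
      exact div_pos (mul_pos hab hbc) hb)
    (sum_markovApprox_le_one hp hp1 A B C)
  rw [neg_sum_mul_log_markovApprox hp] at hgibbs
  linarith

lemma ent_triple_add_eq_of_condIndep (hp : ∀ ω, 0 ≤ p ω) {A : Ω → α} {B : Ω → β} {C : Ω → γ}
    (h : CondIndep p A B C) :
    ent p (fun ω => (A ω, B ω, C ω)) + ent p B
      = ent p (fun ω => (A ω, B ω)) + ent p (fun ω => (B ω, C ω)) := by
  have hpt : ∀ w, pr p (fun ω => (A ω, B ω, C ω)) w * log (pr p (fun ω => (A ω, B ω, C ω)) w)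
      = pr p (fun ω => (A ω, B ω, C ω)) w * log (markovApprox p A B C w) := by
    rintro ⟨a, b, c⟩
    rcases (pr_nonneg hp (fun ω => (A ω, B ω, C ω)) (a, b, c)).eq_or_lt with h0 | h0
    · simp [← h0]
    · have hb := (markovApprox_factors_pos hp A B C h0).2.2
      rw [markovApprox, ← h a b c, mul_div_cancel_right₀ _ hb.ne']
  rw [ent_eq_neg_sum, Finset.sum_congr rfl fun w _ => hpt w, neg_sum_mul_log_markovApprox hp]
  ring

end Markov

section MutualInformation

variable [Fintype α] [DecidableEq α] [Fintype β] [DecidableEq β] [Fintype γ] [DecidableEq γ]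

lemma ent_pair_le_add (hp : ∀ ω, 0 ≤ p ω) (hp1 : ∑ ω, p ω = 1) (A : Ω → α) (C : Ω → γ) :
    ent p (fun ω => (A ω, C ω)) ≤ ent p A + ent p C := by
  have h := ent_submodular hp hp1 A (fun _ => ()) C
  rw [ent_const hp1,
    ent_eq_of_comp_of_comp hp (fun w => (w.1, w.2.2)) (fun w => (w.1, (), w.2))
      (fun _ => rfl) (fun _ => rfl),
    ent_eq_of_comp_of_comp hp (Y := A) Prod.fst (fun a => (a, ())) (fun _ => rfl) (fun _ => rfl),
    ent_eq_of_comp_of_comp hp (Y := C) Prod.snd (fun c => ((), c)) (fun _ => rfl) (fun _ => rfl)]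
    at h
  linarith

lemma ent_pair_comm (X : Ω → α) (Y : Ω → β) :
    ent p (fun ω => (X ω, Y ω)) = ent p (fun ω => (Y ω, X ω)) :=
  (ent_comp_of_injective Prod.swap_injective _).symm

lemma mi_comm (X : Ω → α) (Y : Ω → β) : mi p X Y = mi p Y X := by
  rw [mi, mi, ent_pair_comm]
  ring

lemma mi_comp_left_of_injective {f : α → β} (hf : f.Injective) (X : Ω → α) (Y : Ω → γ) :
    mi p (fun ω => f (X ω)) Y = mi p X Y := by
  rw [mi, mi, ent_comp_of_injective hf,
    ← ent_comp_of_injective (hf.prodMap Function.injective_id) (fun ω => (X ω, Y ω))]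
  rfl

lemma mi_comp_left_le (hp : ∀ ω, 0 ≤ p ω) (hp1 : ∑ ω, p ω = 1) (f : α → β) (X : Ω → α)
    (Y : Ω → γ) : mi p (fun ω => f (X ω)) Y ≤ mi p X Y := by
  have h := ent_submodular hp hp1 Y (fun ω => f (X ω)) X
  rw [ent_eq_of_comp_of_comp hp (Y := fun ω => (X ω, Y ω)) (fun w => (w.2.2, w.1))
      (fun w => (w.2, f w.1, w.1)) (fun _ => rfl) (fun _ => rfl),
    ent_pair_comm Y,
    ent_eq_of_comp_of_comp hp (Y := X) Prod.snd (fun x => (f x, x)) (fun _ => rfl)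
      (fun _ => rfl)] at h
  rw [mi, mi]
  linarith

lemma mi_pair_left_eq_of_condIndep (hp : ∀ ω, 0 ≤ p ω) {A : Ω → α} {B : Ω → β} {C : Ω → γ}
    (h : CondIndep p A B C) : mi p (fun ω => (A ω, B ω)) C = mi p B C := by
  have h := ent_triple_add_eq_of_condIndep hp h
  rw [ent_eq_of_comp_of_comp hp (Y := fun ω => ((A ω, B ω), C ω)) (fun w => ((w.1, w.2.1), w.2.2))
    (fun w => (w.1.1, w.1.2, w.2)) (fun _ => rfl) (fun _ => rfl)] at h
  rw [mi, mi]
  linarith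

lemma mi_le_of_condIndep (hp : ∀ ω, 0 ≤ p ω) (hp1 : ∑ ω, p ω = 1) {A : Ω → α} {B : Ω → β}
    {C : Ω → γ} (h : CondIndep p A B C) : mi p A C ≤ mi p B C :=
  (mi_comp_left_le hp hp1 Prod.fst (fun ω => (A ω, B ω)) C).trans
    (mi_pair_left_eq_of_condIndep hp h).le

lemma mi_pair_right_le (hp : ∀ ω, 0 ≤ p ω) (hp1 : ∑ ω, p ω = 1) (A : Ω → α) (S : Ω → β)
    (C : Ω → γ) :
    mi p A (fun ω => (S ω, C ω)) ≤ mi p A S + mi p (fun ω => (A ω, S ω)) C := by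
  have h := ent_pair_le_add hp hp1 S C
  rw [mi, mi, mi, ent_eq_of_comp_of_comp hp (Y := fun ω => ((A ω, S ω), C ω))
    (fun w => ((w.1, w.2.1), w.2.2)) (fun w => (w.1.1, w.1.2, w.2)) (fun _ => rfl) (fun _ => rfl)]
  linarith

lemma mi_const_right (hp : ∀ ω, 0 ≤ p ω) (hp1 : ∑ ω, p ω = 1) (X : Ω → α) (b : β) :
    mi p X (fun _ => b) = 0 := by
  rw [mi, ent_const hp1, ent_eq_of_comp_of_comp hp (Y := X) Prod.fst (fun x => (x, b))
    (fun _ => rfl) (fun _ => rfl)]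
  ring

lemma condEnt_eq_ent_sub_mi (X : Ω → α) (Y : Ω → β) : condEnt p X Y = ent p X - mi p X Y := by
  rw [condEnt, mi]
  ring

lemma condEnt_le_condEnt_pair_add_mi (hp : ∀ ω, 0 ≤ p ω) (hp1 : ∑ ω, p ω = 1) (K : Ω → α)
    (Y : Ω → β) (Z : Ω → γ) :
    condEnt p K Y ≤ condEnt p K (fun ω => (Y ω, Z ω)) + mi p (fun ω => (K ω, Y ω)) Z := by
  rw [condEnt_eq_ent_sub_mi, condEnt_eq_ent_sub_mi]
  linarith [mi_pair_right_le hp hp1 K Y Z]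

lemma mi_eq_ent_left_of_comp (hp : ∀ ω, 0 ≤ p ω) {K : Ω → α} {X : Ω → β} (f : β → α)
    (hK : ∀ ω, K ω = f (X ω)) : mi p K X = ent p K := by
  rw [mi, ent_eq_of_comp_of_comp hp (Y := X) Prod.snd (fun x => (f x, x)) (fun _ => rfl)
    (fun ω => by rw [hK ω])]
  ring

end MutualInformation

section Memoryless

variable {τ ζ : Type*} [Fintype τ] [DecidableEq τ] [Fintype ζ] [DecidableEq ζ] {n : ℕ}

def eraseAt (T : Fin n → Ω → τ) (i : Fin n) (ω : Ω) (j : Fin n) : Option τ :=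
  if j = i then none else some (T j ω)

def revealBefore (Z : Fin n → Ω → ζ) (k : ℕ) (ω : Ω) (j : Fin n) : Option ζ :=
  if (j : ℕ) < k then some (Z j ω) else none

lemma mi_revealBefore_succ_le (hp : ∀ ω, 0 ≤ p ω) (hp1 : ∑ ω, p ω = 1) (T : Fin n → Ω → τ)
    (Z : Fin n → Ω → ζ) (i : Fin n)
    (hmem : CondIndep p (fun ω => (eraseAt T i ω, revealBefore Z i ω)) (T i) (Z i)) :
    mi p (fun ω j => T j ω) (revealBefore Z (i + 1))
      ≤ mi p (fun ω j => T j ω) (revealBefore Z i) + mi p (T i) (Z i) := by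
  set reveal : (Fin n → Option ζ) × ζ → Fin n → Option ζ :=
    fun w j => if j = i then some w.2 else w.1 j
  have hreveal : revealBefore Z (i + 1) = fun ω => reveal (revealBefore Z i ω, Z i ω) := by
    funext ω j
    by_cases hj : j = i
    · simp [reveal, revealBefore, hj]
    · have : (j : ℕ) ≠ i := Fin.val_ne_of_ne hj
      simp only [reveal, revealBefore, hj, if_false]
      split_ifs <;> first | rfl | omega
  have hinj : Function.Injective fun w : (Fin n → τ) × (Fin n → Option ζ) =>
      (((fun j => if j = i then none else some (w.1 j)), w.2), w.1 i) := by
    rintro ⟨t, s⟩ ⟨t', s'⟩ h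
    simp only [Prod.mk.injEq] at h
    obtain ⟨⟨ht, rfl⟩, hti⟩ := h
    refine Prod.ext (funext fun j => ?_) rfl
    by_cases hj : j = i
    · subst hj; exact hti
    · simpa [hj] using congrFun ht j
  calc mi p (fun ω j => T j ω) (revealBefore Z (i + 1))
      ≤ mi p (fun ω j => T j ω) (fun ω => (revealBefore Z i ω, Z i ω)) := by
        rw [hreveal, mi_comm, mi_comm _ (fun ω => (revealBefore Z i ω, Z i ω))]
        exact mi_comp_left_le hp hp1 reveal (fun ω => (revealBefore Z i ω, Z i ω)) _
    _ ≤ mi p (fun ω j => T j ω) (revealBefore Z i)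
          + mi p (fun ω => ((fun j => T j ω), revealBefore Z i ω)) (Z i) :=
        mi_pair_right_le hp hp1 _ _ _
    _ = mi p (fun ω j => T j ω) (revealBefore Z i) + mi p (T i) (Z i) := by
        rw [← mi_comp_left_of_injective hinj, ← mi_pair_left_eq_of_condIndep hp hmem]
        rfl

lemma mi_le_sum_of_memoryless (hp : ∀ ω, 0 ≤ p ω) (hp1 : ∑ ω, p ω = 1) (T : Fin n → Ω → τ)
    (Z : Fin n → Ω → ζ)
    (hmem : ∀ i, CondIndep p (fun ω => (eraseAt T i ω, revealBefore Z i ω)) (T i) (Z i)) :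
    mi p (fun ω j => T j ω) (fun ω j => Z j ω) ≤ ∑ i, mi p (T i) (Z i) := by
  let g : ℕ → ℝ := fun k => if hk : k < n then mi p (T ⟨k, hk⟩) (Z ⟨k, hk⟩) else 0
  have hprefix : ∀ k ≤ n, mi p (fun ω j => T j ω) (revealBefore Z k) ≤ ∑ i ∈ range k, g i := by
    intro k
    induction k with
    | zero =>
      intro _
      have hnone : revealBefore Z 0 = fun _ _ => none := by
        funext ω j
        simp [revealBefore]
      rw [hnone, mi_const_right hp hp1, Finset.sum_range_zero]
    | succ k ih =>
      intro hk
      have hstep := mi_revealBefore_succ_le hp hp1 T Z ⟨k, hk⟩ (hmem _)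
      have hg : g k = mi p (T ⟨k, hk⟩) (Z ⟨k, hk⟩) := dif_pos hk
      rw [Finset.sum_range_succ, hg]
      linarith [ih (Nat.le_of_succ_le hk)]
  have hall : revealBefore Z n = fun ω j => some (Z j ω) := by
    funext ω j
    simp [revealBefore]
  have hsome : mi p (fun ω j => T j ω) (fun ω j => some (Z j ω))
      = mi p (fun ω j => T j ω) (fun ω j => Z j ω) := by
    rw [mi_comm, mi_comm _ (fun ω j => Z j ω)]
    exact mi_comp_left_of_injective (Option.some_injective ζ).comp_left (fun ω j => Z j ω) _
  have hsum : ∑ i, mi p (T i) (Z i) = ∑ i ∈ range n, g i := by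
    rw [← Fin.sum_univ_eq_sum_range]
    exact Finset.sum_congr rfl fun i _ => by simp [g]
  rw [← hsome, ← hall, hsum]
  exact hprefix n le_rfl

end Memoryless

section Fano

variable {β κ : Type*} [DecidableEq κ]

def decodingError (K L : Ω → κ) (ω : Ω) : Option κ :=
  if K ω = L ω then none else some (K ω)

lemma one_sub_pr_decodingError_none (hp1 : ∑ ω, p ω = 1) (K L : Ω → κ) :
    1 - pr p (decodingError K L) none = ∑ ω, if K ω ≠ L ω then p ω else 0 := by
  rw [← hp1, pr, ← Finset.sum_sub_distrib]
  refine Finset.sum_congr rfl fun ω _ => ?_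
  by_cases h : K ω = L ω <;> simp [decodingError, h]

variable [Fintype β] [DecidableEq β] [Fintype κ]

lemma condEnt_le_ent_decodingError (hp : ∀ ω, 0 ≤ p ω) (hp1 : ∑ ω, p ω = 1) (V : Ω → β)
    (K L : Ω → κ) (Ψ : β → κ) (hL : ∀ ω, L ω = Ψ (V ω)) :
    condEnt p K V ≤ ent p (decodingError K L) := by
  have hdecode : (fun ω => (K ω, V ω)) = fun ω =>
      (fun w : Option κ × β => (w.1.getD (Ψ w.2), w.2)) (decodingError K L ω, V ω) := by
    funext ω
    by_cases h : K ω = L ω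
    · simp [decodingError, h, hL]
    · simp [decodingError, h]
  have hKV := ent_comp_le hp (fun w : Option κ × β => (w.1.getD (Ψ w.2), w.2))
    (fun ω => (decodingError K L ω, V ω))
  rw [← hdecode] at hKV
  have := ent_pair_le_add hp hp1 (decodingError K L) V
  rw [condEnt]
  linarith

lemma ent_option_le (hp : ∀ ω, 0 ≤ p ω) (hp1 : ∑ ω, p ω = 1) (E : Ω → Option κ) :
    ent p E ≤ log 2 + (1 - pr p E none) * log (Fintype.card κ) := by
  set N : ℝ := (Fintype.card κ : ℝ)
  have hN : ∀ _ : κ, 0 < N := fun k => by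
    have : Nonempty κ := ⟨k⟩
    exact Nat.cast_pos.2 Fintype.card_pos
  let q : Option κ → ℝ := fun e => e.elim (1 / 2) fun _ => 1 / (2 * N)
  have hq1 : ∑ e, q e ≤ 1 := by
    rw [Fintype.sum_option]
    rcases isEmpty_or_nonempty κ with hκ | ⟨⟨k⟩⟩
    · norm_num [q]
    · have hhalf : N * (1 / (2 * N)) = 1 / 2 := by field_simp [(hN k).ne']
      simp only [q, Option.elim, Finset.sum_const, Finset.card_univ, nsmul_eq_mul]
      linarith
  have hgibbs := ent_le_neg_sum_mul_log hp hp1 E q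
    (fun e => by cases e <;> simp only [q, Option.elim] <;> positivity)
    (fun e _ => by cases e with
      | none => simp [q]
      | some k => simp only [q, Option.elim]; have := hN k; positivity)
    hq1
  have htotal : pr p E none + ∑ k, pr p E (some k) = 1 := by
    rw [← Fintype.sum_option, sum_pr, hp1]
  have hsome : ∀ k, pr p E (some k) * log (q (some k)) = -(pr p E (some k) * (log 2 + log N)) :=
    fun k => by
      simp only [q, Option.elim]
      rw [one_div, log_inv, log_mul two_ne_zero (hN k).ne']
      ring
  calc ent p E ≤ -∑ e, pr p E e * log (q e) := hgibbs
    _ = pr p E none * log 2 + (∑ k, pr p E (some k)) * (log 2 + log N) := by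
        rw [Fintype.sum_option, Finset.sum_congr rfl fun k _ => hsome k, Finset.sum_neg_distrib,
          Finset.sum_mul]
        simp only [q, Option.elim, one_div, log_inv]
        ring
    _ = log 2 + (1 - pr p E none) * log N := by
        linear_combination (log 2 + log N) * htotal

theorem condEnt_le_log_two_add_errorProb_mul (hp : ∀ ω, 0 ≤ p ω) (hp1 : ∑ ω, p ω = 1)
    (V : Ω → β) (K L : Ω → κ) (Ψ : β → κ) (hL : ∀ ω, L ω = Ψ (V ω)) :
    condEnt p K V
      ≤ log 2 + (∑ ω, if K ω ≠ L ω then p ω else 0) * log (Fintype.card κ) := by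
  rw [← one_sub_pr_decodingError_none hp1]
  exact (condEnt_le_ent_decodingError hp hp1 V K L Ψ hL).trans (ent_option_le hp hp1 _)

end Fano

end CRG

theorem converse_bound_general {Ω α β τ ζ κ : Type*} [Fintype Ω]
    [Fintype α] [DecidableEq α] [Fintype β] [DecidableEq β] [Fintype τ] [DecidableEq τ]
    [Fintype ζ] [DecidableEq ζ] [Fintype κ] [DecidableEq κ]
    (p : Ω → ℝ) (hp : ∀ ω, 0 ≤ p ω) (hp1 : ∑ ω, p ω = 1)
    (n : ℕ) (c ε C : ℝ) (hc : 0 ≤ c)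
    (X : Fin n → Ω → α) (Y : Fin n → Ω → β) (T : Fin n → Ω → τ) (Z : Fin n → Ω → ζ)
    (K L : Ω → κ)
    (hK : ∃ Φ : (Fin n → α) → κ, ∀ ω, K ω = Φ (fun j => X j ω))
    (hL : ∃ Ψ : (Fin n → β) × (Fin n → ζ) → κ,
      ∀ ω, L ω = Ψ ((fun j => Y j ω), (fun j => Z j ω)))
    (herr : (∑ ω, if K ω ≠ L ω then p ω else 0) ≤ ε)
    (hcard : (Fintype.card κ : ℝ) ≤ Real.exp (c * n))
    (hmem : ∀ i : Fin n,
      CondIndep p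
        (fun ω => ((fun j : Fin n => if j = i then none else some (T j ω)),
          (fun j : Fin n => if j < i then some (Z j ω) else none)))
        (T i) (Z i))
    (hC : ∀ i : Fin n, mi p (T i) (Z i) ≤ C)
    (hMarkov2 : CondIndep p
      (fun ω => ((fun j : Fin n => X j ω), K ω, (fun j : Fin n => Y j ω)))
      (fun ω (j : Fin n) => T j ω) (fun ω (j : Fin n) => Z j ω)) :
    mi p K (fun ω (j : Fin n) => X j ω) - mi p K (fun ω (j : Fin n) => Y j ω) =
      ent p K - mi p K (fun ω (j : Fin n) => Y j ω) ∧
    ent p K - mi p K (fun ω (j : Fin n) => Y j ω) =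
      condEnt p K (fun ω (j : Fin n) => Y j ω) ∧
    condEnt p K (fun ω (j : Fin n) => Y j ω) ≤ n * C + 1 + ε * c * n := by
  obtain ⟨Φ, hΦ⟩ := hK
  obtain ⟨Ψ, hΨ⟩ := hL
  refine ⟨by rw [mi_eq_ent_left_of_comp hp Φ hΦ], (condEnt_eq_ent_sub_mi _ _).symm, ?_⟩
  have hε : 0 ≤ ε := (Finset.sum_nonneg fun ω _ => by split_ifs <;> simp [hp ω]).trans herr
  have hlog : log (Fintype.card κ) ≤ c * n := by
    rcases Nat.eq_zero_or_pos (Fintype.card κ) with h | h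
    · rw [h, Nat.cast_zero, log_zero]
      positivity
    · exact (log_le_iff_le_exp (Nat.cast_pos.2 h)).2 hcard
  have hchannel : mi p (fun ω (j : Fin n) => T j ω) (fun ω (j : Fin n) => Z j ω) ≤ n * C :=
    (mi_le_sum_of_memoryless hp hp1 T Z hmem).trans
      ((Finset.sum_le_sum fun i _ => hC i).trans_eq (by simp))
  calc condEnt p K (fun ω (j : Fin n) => Y j ω)
      ≤ condEnt p K (fun ω => ((fun j : Fin n => Y j ω), (fun j : Fin n => Z j ω)))
        + mi p (fun ω => (K ω, fun j : Fin n => Y j ω)) (fun ω (j : Fin n) => Z j ω) :=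
        condEnt_le_condEnt_pair_add_mi hp hp1 _ _ _
    _ ≤ (log 2 + ε * log (Fintype.card κ))
          + mi p (fun ω (j : Fin n) => T j ω) (fun ω (j : Fin n) => Z j ω) := by
        refine add_le_add ?_ ?_
        · exact (condEnt_le_log_two_add_errorProb_mul hp hp1 _ K L Ψ hΨ).trans
            (add_le_add le_rfl (mul_le_mul_of_nonneg_right herr (log_natCast_nonneg _)))
        · exact (mi_comp_left_le hp hp1 (fun w : (Fin n → α) × κ × (Fin n → β) => w.2)
            (fun ω => ((fun j : Fin n => X j ω), K ω, (fun j : Fin n => Y j ω)))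
            (fun ω (j : Fin n) => Z j ω)).trans (mi_le_of_condIndep hp hp1 hMarkov2)
    _ ≤ (1 + ε * (c * n)) + n * C :=
        add_le_add (add_le_add (by linarith [log_two_lt_d9]) (mul_le_mul_of_nonneg_left hlog hε))
          hchannel
    _ = n * C + 1 + ε * c * n := by ring

/-- combined converse: if `K = Φ(X^n)`, `L = Ψ(Y^n,Z^n)`,
`Pr[K≠L] ≤ ε`, `|κ| ≤ e^{cn}`, the channel from `T^n` to `Z^n` is memoryless with
per-letter mutual information at most `C`, and `Y^n — (X^n,K) — T^n — Z^n` is a Markov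
chain, then `I(K;X^n) - I(K;Y^n) = H(K) - I(K;Y^n) = H(K|Y^n) ≤ n·C + 1 + ε·c·n`. -/
theorem converse_bound {Ω α β τ ζ κ : Type*} [Fintype Ω]
    [Fintype α] [DecidableEq α] [Fintype β] [DecidableEq β] [Fintype τ] [DecidableEq τ]
    [Fintype ζ] [DecidableEq ζ] [Fintype κ] [DecidableEq κ]
    (p : Ω → ℝ) (hp : ∀ ω, 0 ≤ p ω) (hp1 : ∑ ω, p ω = 1)
    (n : ℕ) (c ε C : ℝ) (hc : 0 ≤ c) (hε1 : ε ≤ 1)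
    (X : Fin n → Ω → α) (Y : Fin n → Ω → β) (T : Fin n → Ω → τ) (Z : Fin n → Ω → ζ)
    (K L : Ω → κ)
    (hK : ∃ Φ : (Fin n → α) → κ, ∀ ω, K ω = Φ (fun j => X j ω))
    (hL : ∃ Ψ : (Fin n → β) × (Fin n → ζ) → κ,
      ∀ ω, L ω = Ψ ((fun j => Y j ω), (fun j => Z j ω)))
    (herr : (∑ ω, if K ω ≠ L ω then p ω else 0) ≤ ε)
    (hcard : (Fintype.card κ : ℝ) ≤ Real.exp (c * n))
    (hmem : ∀ i : Fin n,
      CondIndep p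
        (fun ω => ((fun j : Fin n => if j = i then none else some (T j ω)),
          (fun j : Fin n => if j < i then some (Z j ω) else none)))
        (T i) (Z i))
    (hC : ∀ i : Fin n, mi p (T i) (Z i) ≤ C)
    (hMarkov1 : CondIndep p (fun ω (j : Fin n) => Y j ω)
      (fun ω => ((fun j : Fin n => X j ω), K ω)) (fun ω (j : Fin n) => T j ω))
    (hMarkov2 : CondIndep p
      (fun ω => ((fun j : Fin n => X j ω), K ω, (fun j : Fin n => Y j ω)))
      (fun ω (j : Fin n) => T j ω) (fun ω (j : Fin n) => Z j ω)) :
    mi p K (fun ω (j : Fin n) => X j ω) - mi p K (fun ω (j : Fin n) => Y j ω) =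
      ent p K - mi p K (fun ω (j : Fin n) => Y j ω) ∧
    ent p K - mi p K (fun ω (j : Fin n) => Y j ω) =
      condEnt p K (fun ω (j : Fin n) => Y j ω) ∧
    condEnt p K (fun ω (j : Fin n) => Y j ω) ≤ n * C + 1 + ε * c * n :=
  converse_bound_general p hp hp1 n c ε C hc X Y T Z K L hK hL herr hcard hmem hC hMarkov2
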